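/- Let F ∈ F²(a,b), let U be the full-measure open set of the softplus-approximation topology theorem (on which F is locally equal to a real analytic function, ∇F exists, and ∇F_α → ∇F pointwise), let x̄, x' ∈ [a,b], and let γ(t) = x' + t(x̄ − x'). If λ({t ∈ [0,1] : γ(t) ∈ U}) = 1, then lim_{α→∞} IG(x̄, x', F_α) = IG(x̄, x', F). -/

import Mathlib

open MeasureTheory Filter

/-- The partial derivative of `F : ℝⁿ → ℝ` in the `i`-th coordinate at `x`. -/
noncomputable def pderiv' {n : ℕ} (F : (Fin n → ℝ) → ℝ) (i : Fin n) (x : Fin n → ℝ) : ℝ :=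
  deriv (fun t => F (Function.update x i t)) (x i)

/-- The Integrated Gradients attribution. -/
noncomputable def IG {n : ℕ} (xbar x' : Fin n → ℝ) (F : (Fin n → ℝ) → ℝ) : Fin n → ℝ :=
  fun i => (xbar i - x' i) * ∫ t in (0:ℝ)..1, pderiv' F i (x' + t • (xbar - x'))

/-- A feed-forward neural network architecture (composition of layers, each followed
by componentwise identity or ReLU). -/
inductive NN : ℕ → ℕ → Type where
  | input (k : ℕ) : NN k k
  | layer {k l r : ℕ} (prev : NN k l) (F : (Fin l → ℝ) → (Fin r → ℝ)) (s : Fin r → Bool) :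
      NN k r

/-- Evaluation of a network. -/
noncomputable def NN.eval : {k r : ℕ} → NN k r → (Fin k → ℝ) → Fin r → ℝ
  | _, _, .input _, x => x
  | _, _, .layer prev F s, x => fun i =>
      if s i then max (F (NN.eval prev x) i) 0 else F (NN.eval prev x) i

/-- The softplus approximation of the network: every ReLU is replaced with
`s_α(z) = ln(1 + exp(αz))/α`. -/
noncomputable def NN.evalSoft (α : ℝ) : {k r : ℕ} → NN k r → (Fin k → ℝ) → Fin r → ℝ
  | _, _, .input _, x => x
  | _, _, .layer prev F s, x => fun i =>
      if s i then Real.log (1 + Real.exp (α * F (NN.evalSoft α prev x) i)) / α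
      else F (NN.evalSoft α prev x) i

/-- All layer functions of the network are real analytic. -/
def NN.IsAnalytic : {k r : ℕ} → NN k r → Prop
  | _, _, .input _ => True
  | _, _, .layer prev F _ =>
      prev.IsAnalytic ∧ ∀ i, AnalyticOnNhd ℝ (fun x => F x i) Set.univ

/-!
Integrated Gradients is `(x̄ᵢ - x'ᵢ)` times the integral over `[0,1]` of `∂ᵢF` along the segment
`γ t = x' + t (x̄ - x')`. Since `γ t ∈ U` for almost every `t`, the integrands for `F_α` converge
almost everywhere to those for `F`. They are also bounded uniformly in `α ≥ 1`: softplus is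
`1`-Lipschitz and `|s_α z| ≤ |z| + log 2`, so by induction over the layers the networks `F_α`
map the compact segment into a fixed bounded set with uniformly bounded derivatives. Dominated
convergence concludes.
-/

open Topology

theorem norm_fderiv_apply_le {𝕜 : Type*} [NontriviallyNormedField 𝕜] {E : Type*}
    [NormedAddCommGroup E] [NormedSpace 𝕜 E] {ι : Type*} [Fintype ι] {F' : ι → Type*}
    [∀ i, NormedAddCommGroup (F' i)] [∀ i, NormedSpace 𝕜 (F' i)] {f : E → ∀ i, F' i} {x : E}
    (hf : DifferentiableAt 𝕜 f x) (i : ι) :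
    ‖fderiv 𝕜 (fun y => f y i) x‖ ≤ ‖fderiv 𝕜 f x‖ := by
  rw [fderiv_apply hf i]
  exact ContinuousLinearMap.opNorm_le_bound _ (norm_nonneg _) fun v =>
    (norm_le_pi_norm _ i).trans ((fderiv 𝕜 f x).le_opNorm v)

theorem pderiv'_eq_fderiv_apply {n : ℕ} {F : (Fin n → ℝ) → ℝ} {x : Fin n → ℝ}
    (hF : DifferentiableAt ℝ F x) (i : Fin n) : pderiv' F i x = fderiv ℝ F x (Pi.single i 1) :=
  (hF.hasFDerivAt.comp_hasDerivAt_of_eq (x i) (hasDerivAt_update x i (x i)) (by simp)).deriv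

theorem ae_imp_of_measure_sep_eq {α : Type*} [MeasurableSpace α] {μ : Measure α} {s : Set α}
    {p : α → Prop} (hp : NullMeasurableSet {x ∈ s | p x} μ) (hs : μ s ≠ ⊤)
    (h : μ {x ∈ s | p x} = μ s) : ∀ᵐ x ∂μ, x ∈ s → p x := by
  have hnull : μ (s \ {x ∈ s | p x}) = 0 := by
    rw [measure_sdiff (fun x hx => hx.1) hp (h ▸ hs), h, tsub_self]
  exact (ae_le_set.2 hnull).mono fun x hx hxs => (hx hxs).2

noncomputable def softplus (α z : ℝ) : ℝ := Real.log (1 + Real.exp (α * z)) / α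

noncomputable def softplusAct {ι : Type*} (α : ℝ) (s : ι → Bool) (v : ι → ℝ) : ι → ℝ :=
  fun i => if s i then softplus α (v i) else v i

theorem contDiff_softplus (α : ℝ) {n : WithTop ℕ∞} : ContDiff ℝ n (softplus α) :=
  ((contDiff_const.add (Real.contDiff_exp.comp (contDiff_const.mul contDiff_id))).log
    fun z => (by positivity : (0 : ℝ) < 1 + Real.exp (α * z)).ne').div_const α

theorem hasDerivAt_softplus {α : ℝ} (hα : α ≠ 0) (z : ℝ) :
    HasDerivAt (softplus α) (Real.exp (α * z) / (1 + Real.exp (α * z))) z := by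
  have hinner : HasDerivAt (fun z => 1 + Real.exp (α * z)) (Real.exp (α * z) * α) z := by
    simpa using (((hasDerivAt_id z).const_mul α).exp).const_add 1
  refine ((hinner.log (by positivity)).div_const α).congr_deriv ?_
  field_simp

theorem lipschitzWith_softplus (α : ℝ) : LipschitzWith 1 (softplus α) := by
  rcases eq_or_ne α 0 with rfl | hα
  · -- `softplus 0` is the zero function, since `x / 0 = 0`
    have hzero : softplus 0 = fun _ => 0 := by funext z; simp [softplus]
    rw [hzero]
    exact LipschitzWith.const' 0
  refine lipschitzWith_of_nnnorm_deriv_le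
    ((contDiff_softplus α (n := 1)).differentiable one_ne_zero) fun z => ?_
  rw [(hasDerivAt_softplus hα z).deriv, ← NNReal.coe_le_coe, coe_nnnorm, Real.norm_eq_abs,
    abs_of_pos (by positivity), NNReal.coe_one, div_le_one (by positivity)]
  simp

theorem abs_softplus_le {α : ℝ} (hα : 1 ≤ α) (z : ℝ) : |softplus α z| ≤ |z| + Real.log 2 := by
  have hzero : softplus α 0 = Real.log 2 / α := by norm_num [softplus, one_add_one_eq_two]
  have hlog2 : Real.log 2 / α ≤ Real.log 2 := div_le_self (Real.log_nonneg one_le_two) hα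
  have hlip : |softplus α z - softplus α 0| ≤ |z| := by
    simpa [Real.dist_eq] using (lipschitzWith_softplus α).dist_le_mul z 0
  have hα0 : 0 < α := by linarith
  calc |softplus α z| = |(softplus α z - softplus α 0) + softplus α 0| := by ring_nf
    _ ≤ |softplus α z - softplus α 0| + |softplus α 0| := abs_add_le _ _
    _ ≤ |z| + Real.log 2 := by
        refine add_le_add hlip ?_
        rwa [hzero, abs_of_nonneg (div_nonneg (Real.log_nonneg one_le_two) hα0.le)]

section SoftplusAct

variable {ι : Type*} [Fintype ι] (α : ℝ) (s : ι → Bool)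

theorem contDiff_softplusAct {n : WithTop ℕ∞} : ContDiff ℝ n (softplusAct α s) :=
  contDiff_pi.2 fun i => by
    by_cases hs : s i
    · simp only [softplusAct, hs, if_true]
      exact (contDiff_softplus α).comp (contDiff_apply ℝ ℝ i)
    · simpa [softplusAct, hs] using contDiff_apply ℝ ℝ i

theorem lipschitzWith_softplusAct : LipschitzWith 1 (softplusAct α s) := by
  refine LipschitzWith.of_dist_le_mul fun v w => ?_
  rw [NNReal.coe_one, one_mul, dist_pi_le_iff dist_nonneg]
  intro i
  refine le_trans ?_ (dist_le_pi_dist v w i)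
  by_cases hs : s i
  · simpa [softplusAct, hs] using (lipschitzWith_softplus α).dist_le_mul (v i) (w i)
  · simp [softplusAct, hs]

variable {α}

theorem norm_softplusAct_le (hα : 1 ≤ α) (v : ι → ℝ) :
    ‖softplusAct α s v‖ ≤ ‖v‖ + Real.log 2 := by
  have hlog2 := Real.log_nonneg one_le_two
  refine (pi_norm_le_iff_of_nonneg (add_nonneg (norm_nonneg v) hlog2)).2 fun i => ?_
  have hvi : |v i| ≤ ‖v‖ := by simpa using norm_le_pi_norm v i
  rw [Real.norm_eq_abs]
  by_cases hs : s i
  · simp only [softplusAct, hs, if_true]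
    linarith [abs_softplus_le hα (v i)]
  · simpa [softplusAct, hs] using hvi.trans (le_add_of_nonneg_right hlog2)

end SoftplusAct

namespace NN

theorem evalSoft_input (α : ℝ) (k : ℕ) : (input k).evalSoft α = id := by
  funext x
  rw [evalSoft, id]

theorem evalSoft_layer (α : ℝ) {k l r : ℕ} (prev : NN k l) (F : (Fin l → ℝ) → Fin r → ℝ)
    (s : Fin r → Bool) :
    (prev.layer F s).evalSoft α = softplusAct α s ∘ F ∘ prev.evalSoft α := by
  funext x
  rw [evalSoft]
  rfl

theorem isAnalytic_layer {k l r : ℕ} {prev : NN k l} {F : (Fin l → ℝ) → Fin r → ℝ}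
    {s : Fin r → Bool} :
    (prev.layer F s).IsAnalytic ↔
      prev.IsAnalytic ∧ ∀ i, AnalyticOnNhd ℝ (fun x => F x i) Set.univ := by
  rw [IsAnalytic]

theorem IsAnalytic.contDiff_layer {k l r : ℕ} {prev : NN k l} {F : (Fin l → ℝ) → Fin r → ℝ}
    {s : Fin r → Bool} (h : (prev.layer F s).IsAnalytic) {n : WithTop ℕ∞} : ContDiff ℝ n F :=
  contDiff_pi.2 fun i => (isAnalytic_layer.1 h).2 i |>.contDiff

variable {k r : ℕ} {net : NN k r}

theorem contDiff_evalSoft (hnet : net.IsAnalytic) (α : ℝ) {n : WithTop ℕ∞} :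
    ContDiff ℝ n (net.evalSoft α) := by
  induction net with
  | input => exact evalSoft_input α k ▸ contDiff_id
  | layer prev F s ih =>
    rw [evalSoft_layer]
    exact (contDiff_softplusAct α s).comp
      (hnet.contDiff_layer.comp (ih (isAnalytic_layer.1 hnet).1))

theorem exists_norm_evalSoft_le (hnet : net.IsAnalytic) {K : Set (Fin k → ℝ)}
    (hK : IsCompact K) : ∃ C, ∀ α, 1 ≤ α → ∀ x ∈ K, ‖net.evalSoft α x‖ ≤ C := by
  induction net with
  | input =>
    obtain ⟨C, hC⟩ := hK.exists_bound_of_continuousOn continuousOn_id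
    exact ⟨C, fun α _ => by simpa [evalSoft_input] using hC⟩
  | layer prev F s ih =>
    obtain ⟨C, hC⟩ := ih (isAnalytic_layer.1 hnet).1
    obtain ⟨M, hM⟩ := (isCompact_closedBall 0 C).exists_bound_of_continuousOn
      (hnet.contDiff_layer (n := 0)).continuous.continuousOn
    refine ⟨M + Real.log 2, fun α hα x hx => ?_⟩
    rw [evalSoft_layer, Function.comp_apply, Function.comp_apply]
    calc ‖softplusAct α s (F (prev.evalSoft α x))‖
        ≤ ‖F (prev.evalSoft α x)‖ + Real.log 2 := norm_softplusAct_le s hα _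
      _ ≤ M + Real.log 2 := by
        gcongr
        exact hM _ (mem_closedBall_zero_iff.2 (hC α hα x hx))

theorem exists_norm_fderiv_evalSoft_le (hnet : net.IsAnalytic) {K : Set (Fin k → ℝ)}
    (hK : IsCompact K) : ∃ C, ∀ α, 1 ≤ α → ∀ x ∈ K, ‖fderiv ℝ (net.evalSoft α) x‖ ≤ C := by
  induction net with
  | input =>
    refine ⟨1, fun α _ x _ => ?_⟩
    rw [evalSoft_input, fderiv_id]
    exact ContinuousLinearMap.norm_id_le
  | layer prev F s ih =>
    obtain ⟨C₀, hC₀⟩ := exists_norm_evalSoft_le (isAnalytic_layer.1 hnet).1 hK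
    obtain ⟨C₁, hC₁⟩ := ih (isAnalytic_layer.1 hnet).1
    have hF : ContDiff ℝ 1 F := hnet.contDiff_layer
    obtain ⟨M, hM⟩ := (isCompact_closedBall 0 C₀).exists_bound_of_continuousOn
      (hF.continuous_fderiv one_ne_zero).continuousOn
    refine ⟨M * C₁, fun α hα x hx => ?_⟩
    have hprev : Differentiable ℝ (prev.evalSoft α) :=
      (contDiff_evalSoft (isAnalytic_layer.1 hnet).1 α (n := 1)).differentiable one_ne_zero
    have hFdiff : Differentiable ℝ F := hF.differentiable one_ne_zero
    have hFM := hM _ (mem_closedBall_zero_iff.2 (hC₀ α hα x hx))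
    rw [evalSoft_layer, fderiv_comp x ((contDiff_softplusAct (n := 1) α s).differentiable
      one_ne_zero _) ((hFdiff.comp hprev) x), fderiv_comp x (hFdiff _) (hprev x)]
    calc _ ≤ ‖fderiv ℝ (softplusAct α s) (F (prev.evalSoft α x))‖ *
          (‖fderiv ℝ F (prev.evalSoft α x)‖ * ‖fderiv ℝ (prev.evalSoft α) x‖) :=
          (ContinuousLinearMap.opNorm_comp_le _ _).trans
            (mul_le_mul_of_nonneg_left (ContinuousLinearMap.opNorm_comp_le _ _) (norm_nonneg _))
      _ ≤ 1 * (M * C₁) :=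
          mul_le_mul (norm_fderiv_le_of_lipschitz ℝ (lipschitzWith_softplusAct α s))
            (mul_le_mul hFM (hC₁ α hα x hx) (norm_nonneg _) ((norm_nonneg _).trans hFM))
            (by positivity) zero_le_one
      _ = M * C₁ := one_mul _

end NN

theorem tendsto_IG_of_tendsto_fderiv {n : ℕ} {ι : Type*} {l : Filter ι} [l.IsCountablyGenerated]
    {G : ι → (Fin n → ℝ) → ℝ} {F : (Fin n → ℝ) → ℝ} {xbar x' : Fin n → ℝ} (C : ℝ)
    (hG : ∀ k, ContDiff ℝ 1 (G k))
    (hbound : ∀ᶠ k in l, ∀ t ∈ Set.Icc (0 : ℝ) 1, ‖fderiv ℝ (G k) (x' + t • (xbar - x'))‖ ≤ C)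
    (hlim : ∀ᵐ t, t ∈ Set.Icc (0 : ℝ) 1 → DifferentiableAt ℝ F (x' + t • (xbar - x')) ∧
      Tendsto (fun k => fderiv ℝ (G k) (x' + t • (xbar - x'))) l
        (𝓝 (fderiv ℝ F (x' + t • (xbar - x'))))) :
    Tendsto (fun k => IG xbar x' (G k)) l (𝓝 (IG xbar x' F)) := by
  have hIoc : Set.uIoc (0 : ℝ) 1 ⊆ Set.Icc 0 1 := by
    rw [Set.uIoc_of_le zero_le_one]
    exact Set.Ioc_subset_Icc_self
  have hγc : Continuous fun t : ℝ => x' + t • (xbar - x') := by fun_prop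
  refine tendsto_pi_nhds.2 fun i => Tendsto.const_mul (xbar i - x' i) ?_
  simp only [pderiv'_eq_fderiv_apply ((hG _).differentiable one_ne_zero _)]
  refine intervalIntegral.tendsto_integral_filter_of_dominated_convergence (fun _ => C)
    (Eventually.of_forall fun k => ?_) ?_ intervalIntegrable_const ?_
  · exact ((((hG k).continuous_fderiv one_ne_zero).comp hγc).clm_apply
      continuous_const).aestronglyMeasurable
  · filter_upwards [hbound] with k hk
    refine Eventually.of_forall fun t ht => ?_
    calc _ ≤ ‖fderiv ℝ (G k) (x' + t • (xbar - x'))‖ * ‖(Pi.single i 1 : Fin n → ℝ)‖ :=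
          ContinuousLinearMap.le_opNorm _ _
      _ ≤ C := by
          rw [Pi.norm_single, norm_one, mul_one]
          exact hk t (hIoc ht)
  · filter_upwards [hlim] with t ht htI
    obtain ⟨hF, hconv⟩ := ht (hIoc htI)
    rw [pderiv'_eq_fderiv_apply hF]
    exact ((ContinuousLinearMap.apply ℝ ℝ (Pi.single i (1 : ℝ))).continuous.tendsto _).comp hconv

theorem IG_softplus_convergence_general {n : ℕ} (a b : Fin n → ℝ)
    (net : NN n 1) (hnet : net.IsAnalytic)
    (F : (Fin n → ℝ) → ℝ)
    (U : Set (Fin n → ℝ)) (hUopen : IsOpen U)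
    (hU : ∀ x ∈ U,
      (∃ B : Set (Fin n → ℝ), IsOpen B ∧ x ∈ B ∧
        ∃ H : (Fin n → ℝ) → ℝ, AnalyticOnNhd ℝ H (Set.uIcc a b) ∧
          Set.EqOn F H (B ∩ Set.uIcc a b)) ∧
      DifferentiableAt ℝ F x ∧
      Tendsto (fun α : ℝ => fderiv ℝ (fun y => net.evalSoft α y 0) x) atTop
        (nhds (fderiv ℝ F x)))
    (xbar x' : Fin n → ℝ)
    (hγ : volume {t ∈ Set.Icc (0:ℝ) 1 | x' + t • (xbar - x') ∈ U} = 1) :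
    Tendsto (fun α : ℝ => IG xbar x' (fun y => net.evalSoft α y 0)) atTop
      (nhds (IG xbar x' F)) := by
  have hγc : Continuous fun t : ℝ => x' + t • (xbar - x') := by fun_prop
  obtain ⟨C, hC⟩ := net.exists_norm_fderiv_evalSoft_le hnet (isCompact_Icc.image hγc)
  have hdiff : ∀ α, Differentiable ℝ (net.evalSoft α) := fun α =>
    (net.contDiff_evalSoft hnet α (n := 1)).differentiable one_ne_zero
  refine tendsto_IG_of_tendsto_fderiv C (fun α => contDiff_pi.1 (net.contDiff_evalSoft hnet α) 0)
    ?_ ?_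
  · filter_upwards [eventually_ge_atTop 1] with α hα t ht
    exact (norm_fderiv_apply_le (hdiff α _) 0).trans (hC α hα _ ⟨t, ht, rfl⟩)
  · have hmeas : MeasurableSet {t ∈ Set.Icc (0 : ℝ) 1 | x' + t • (xbar - x') ∈ U} :=
      measurableSet_Icc.inter (hUopen.preimage hγc).measurableSet
    filter_upwards [ae_imp_of_measure_sep_eq hmeas.nullMeasurableSet (by simp)
      (by rw [hγ, Real.volume_Icc, sub_zero, ENNReal.ofReal_one])] with t ht ht01
    exact (hU _ (ht ht01)).2

/-- **Convergence of IG along softplus approximations**: let `F ∈ F²(a,b)`, let `U` be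
the full-measure open set of the softplus-approximation topology theorem (on which `F`
is locally equal to a real analytic function, `∇F` exists, and `∇F_α → ∇F` pointwise),
and let `γ(t) = x' + t(x̄ − x')`. If `λ({t ∈ [0,1] : γ(t) ∈ U}) = 1` then
`IG(x̄, x', F_α) → IG(x̄, x', F)` as `α → ∞`. -/
theorem IG_softplus_convergence {n : ℕ} (a b : Fin n → ℝ)
    (net : NN n 1) (hnet : net.IsAnalytic)
    (F : (Fin n → ℝ) → ℝ) (hF : ∀ x, F x = net.eval x 0)
    (U : Set (Fin n → ℝ)) (hUsub : U ⊆ Set.uIcc a b) (hUopen : IsOpen U)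
    (hUvol : volume U = volume (Set.uIcc a b))
    (hU : ∀ x ∈ U,
      (∃ B : Set (Fin n → ℝ), IsOpen B ∧ x ∈ B ∧
        ∃ H : (Fin n → ℝ) → ℝ, AnalyticOnNhd ℝ H (Set.uIcc a b) ∧
          Set.EqOn F H (B ∩ Set.uIcc a b)) ∧
      DifferentiableAt ℝ F x ∧
      Tendsto (fun α : ℝ => fderiv ℝ (fun y => net.evalSoft α y 0) x) atTop
        (nhds (fderiv ℝ F x)))
    (xbar x' : Fin n → ℝ) (hxbar : xbar ∈ Set.uIcc a b) (hx' : x' ∈ Set.uIcc a b)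
    (hγ : volume {t ∈ Set.Icc (0:ℝ) 1 | x' + t • (xbar - x') ∈ U} = 1) :
    Tendsto (fun α : ℝ => IG xbar x' (fun y => net.evalSoft α y 0)) atTop
      (nhds (IG xbar x' F)) :=
  IG_softplus_convergence_general a b net hnet F U hUopen hU xbar x' hγ
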